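/- The polynomial X^4 - 3X^3 - X^2 + 3X + 1 (the characteristic polynomial of the matrix A3) has four pairwise distinct real roots, and none of these roots equals 1 or -1; hence A3 is a hyperbolic operator (it has four distinct real eigenvalues, none of absolute value 1). -/

import Mathlib

open Matrix Polynomial

def A3R : Matrix (Fin 4) (Fin 4) ℝ :=
  !![0, 1, 0, 0; 0, 0, 1, 0; 0, 0, 0, 1; -1, -3, 1, 3]

/-- The characteristic polynomial of `A3`, as a real polynomial. -/
noncomputable def p3 : Polynomial ℝ := X ^ 4 - 3 * X ^ 3 - X ^ 2 + 3 * X + 1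

/-!
Writing `t = x - x⁻¹`, one has `x⁻² · p3(x) = t² - 3t + 1`, whose roots are `φ²` and `ψ²`
(`φ`, `ψ` the golden ratio and its conjugate). Hence `p3(x) = (x² - φ² x - 1)(x² - ψ² x - 1)`,
and each factor `x² - c x - 1` has one positive root `posRoot c` and one negative root
`negRoot c = -posRoot (-c)`. Since `c = x - x⁻¹` at `x = posRoot c` and `x ↦ x - x⁻¹` is
increasing on `x > 0`, both roots are strictly increasing in `c`; as `ψ² < φ²` this orders the
four roots strictly. Neither `1` nor `-1` is a root since `p3(±1) = 1`, and since `A3R` is the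
companion matrix of `p3`, every root `x` has the eigenvector `(1, x, x², x³)`.
-/

open Real goldenRatio

noncomputable def posRoot (c : ℝ) : ℝ := (c + √(c ^ 2 + 4)) / 2

noncomputable def negRoot (c : ℝ) : ℝ := (c - √(c ^ 2 + 4)) / 2

lemma sq_sub_mul_sub_one_eq_zero_iff {c x : ℝ} :
    x ^ 2 - c * x - 1 = 0 ↔ x = posRoot c ∨ x = negRoot c := by
  have hdisc : discrim 1 (-c) (-1) = √(c ^ 2 + 4) * √(c ^ 2 + 4) := by
    rw [Real.mul_self_sqrt (by positivity), discrim]; ring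
  unfold posRoot negRoot
  convert quadratic_eq_zero_iff one_ne_zero hdisc x using 2 <;> ring_nf

lemma posRoot_pos (c : ℝ) : 0 < posRoot c := by
  have : |c| < √(c ^ 2 + 4) := by
    rw [← Real.sqrt_sq_eq_abs]; gcongr; linarith
  unfold posRoot; linarith [neg_abs_le c]

lemma negRoot_eq_neg_posRoot_neg (c : ℝ) : negRoot c = -posRoot (-c) := by
  simp only [negRoot, posRoot, neg_sq]; ring

lemma negRoot_neg (c : ℝ) : negRoot c < 0 := by
  rw [negRoot_eq_neg_posRoot_neg, neg_lt_zero]; exact posRoot_pos _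

lemma posRoot_sub_inv (c : ℝ) : posRoot c - (posRoot c)⁻¹ = c := by
  have hx := (posRoot_pos c).ne'
  have hroot := sq_sub_mul_sub_one_eq_zero_iff (c := c) |>.2 (Or.inl rfl)
  field_simp
  linear_combination hroot

lemma posRoot_strictMono : StrictMono posRoot := by
  intro c d hcd
  by_contra! h
  have := sub_le_sub h (inv_anti₀ (posRoot_pos d) h)
  rw [posRoot_sub_inv, posRoot_sub_inv] at this
  exact hcd.not_ge this

lemma negRoot_strictMono : StrictMono negRoot := by
  intro c d hcd
  simp only [negRoot_eq_neg_posRoot_neg, neg_lt_neg_iff]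
  exact posRoot_strictMono (neg_lt_neg hcd)

lemma eval_p3_eq_mul {a b : ℝ} (hsum : a + b = 3) (hprod : a * b = 1) (x : ℝ) :
    p3.eval x = (x ^ 2 - a * x - 1) * (x ^ 2 - b * x - 1) := by
  simp only [p3, eval_add, eval_sub, eval_mul, eval_pow, eval_X, eval_ofNat, eval_one]
  linear_combination (x ^ 3 - x) * hsum - x ^ 2 * hprod

lemma eval_p3_eq_mul_golden (x : ℝ) :
    p3.eval x = (x ^ 2 - φ ^ 2 * x - 1) * (x ^ 2 - ψ ^ 2 * x - 1) :=
  eval_p3_eq_mul (by rw [goldenRatio_sq, goldenConj_sq]; linarith [goldenRatio_add_goldenConj])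
    (by rw [← mul_pow, goldenRatio_mul_goldenConj]; norm_num) x

noncomputable def p3Roots : Fin 4 → ℝ :=
  ![negRoot (ψ ^ 2), negRoot (φ ^ 2), posRoot (ψ ^ 2), posRoot (φ ^ 2)]

lemma goldenConj_sq_lt_goldenRatio_sq : ψ ^ 2 < φ ^ 2 := by
  rw [goldenRatio_sq, goldenConj_sq]; linarith [goldenConj_neg, goldenRatio_pos]

lemma p3Roots_strictMono : StrictMono p3Roots := by
  refine Fin.strictMono_iff_lt_succ.2 fun i => ?_
  fin_cases i
  · exact negRoot_strictMono goldenConj_sq_lt_goldenRatio_sq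
  · exact (negRoot_neg _).trans (posRoot_pos _)
  · exact posRoot_strictMono goldenConj_sq_lt_goldenRatio_sq

lemma eval_p3_eq_zero_iff {x : ℝ} : p3.eval x = 0 ↔ ∃ i, p3Roots i = x := by
  simp only [eval_p3_eq_mul_golden, mul_eq_zero, sq_sub_mul_sub_one_eq_zero_iff, p3Roots,
    Fin.exists_fin_succ, IsEmpty.exists_iff, or_false, Fin.succ_zero_eq_one, Fin.succ_one_eq_two,
    cons_val_zero, cons_val_one, cons_val_two]
  tauto

lemma A3R_mulVec_powers {x : ℝ} (hx : p3.eval x = 0) :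
    A3R *ᵥ ![1, x, x ^ 2, x ^ 3] = x • ![1, x, x ^ 2, x ^ 3] := by
  simp only [p3, eval_add, eval_sub, eval_mul, eval_pow, eval_X, eval_ofNat, eval_one] at hx
  ext i
  fin_cases i <;>
    simp only [A3R, mulVec, dotProduct, Fin.sum_univ_four, of_apply, cons_val', cons_val_fin_one,
      cons_val_zero, cons_val_one, cons_val, Fin.isValue, Fin.reduceFinMk, mul_one, one_mul,
      zero_mul, zero_add, add_zero, neg_mul, Pi.smul_apply, smul_eq_mul]
  · ring
  · ring
  · linear_combination -hx

lemma mem_spectrum_A3R {x : ℝ} (hx : p3.eval x = 0) : x ∈ spectrum ℝ A3R := by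
  rw [← Matrix.spectrum_toLin']
  refine Module.End.HasEigenvalue.mem_spectrum
    (Module.End.hasEigenvalue_of_hasEigenvector (x := ![1, x, x ^ 2, x ^ 3]) ?_)
  refine ⟨Module.End.mem_eigenspace_iff.2 ?_, fun h => by simpa using congrFun h 0⟩
  rw [toLin'_apply, A3R_mulVec_powers hx]

lemma eval_p3_ne_zero_of_abs_eq_one {x : ℝ} (hx : |x| = 1) : p3.eval x ≠ 0 := by
  rcases abs_eq (zero_le_one' ℝ) |>.1 hx with rfl | rfl <;> norm_num [p3]

theorem statement16 :
    ∃ r : Fin 4 → ℝ,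
      Function.Injective r ∧
      (∀ i, p3.eval (r i) = 0) ∧
      (∀ x : ℝ, p3.eval x = 0 → ∃ i, x = r i) ∧
      (∀ i, r i ≠ 1 ∧ r i ≠ -1) ∧
      (∀ i, r i ∈ spectrum ℝ A3R) ∧
      (∀ i, |r i| ≠ 1) := by
  have hroot (i : Fin 4) : p3.eval (p3Roots i) = 0 := eval_p3_eq_zero_iff.2 ⟨i, rfl⟩
  have habs (i : Fin 4) : |p3Roots i| ≠ 1 := fun h => eval_p3_ne_zero_of_abs_eq_one h (hroot i)
  refine ⟨p3Roots, p3Roots_strictMono.injective, hroot,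
    fun x hx => (eval_p3_eq_zero_iff.1 hx).imp fun _ => Eq.symm, fun i => ⟨?_, ?_⟩,
    fun i => mem_spectrum_A3R (hroot i), habs⟩
  · exact fun h => habs i (by rw [h, abs_one])
  · exact fun h => habs i (by rw [h, abs_neg, abs_one])
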